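/- arXiv:1403.6088 — 4 statements merged into one kernel-verified Lean document; each statement's English description precedes it below -/
import Mathlib

section
/- Let μ be a finite positive Radon measure on T*𝕋^d = 𝕋^d × (ℝ^d)* and Λ a primitive submodule of (ℤ^d)*. Then the distribution ⟨μ⟩_Λ obtained by keeping only the x-Fourier modes of μ with frequencies in Λ, i.e. ⟨μ⟩_Λ(x,ξ) = Σ_{k∈Λ} μ̂_k(ξ) e^{ik·x}/(2π)^{d/2} where μ̂_k(ξ) := ∫_{𝕋^d} e^{-ik·x}/(2π)^{d/2} μ(dx, ·), is itself a finite positive Radon measure on T*𝕋^d. -/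
open MeasureTheory Real Filter
open scoped Classical

/-- Coercion of an integer vector to a real vector. -/
def zc {d : ℕ} (k : Fin d → ℤ) : Fin d → ℝ := fun i => (k i : ℝ)

/-- A submodule Λ of the lattice (ℤ^d)* is primitive: ⟨Λ⟩ ∩ (ℤ^d)* = Λ. -/
def IsPrimitive {d : ℕ} (Λ : Submodule ℤ (Fin d → ℤ)) : Prop :=
  ∀ k : Fin d → ℤ, zc k ∈ Submodule.span ℝ (zc '' (Λ : Set (Fin d → ℤ))) → k ∈ Λ

/-- The basic character x ↦ e^{ix} on the circle ℝ/2πℤ. -/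
noncomputable def ec : AddCircle (2 * π) → ℂ :=
  Function.Periodic.lift (f := fun t : ℝ => Complex.exp (t * Complex.I)) (by
    intro t
    show Complex.exp (((t + 2 * π : ℝ) : ℂ) * Complex.I) = Complex.exp ((t : ℂ) * Complex.I)
    have h : ((t + 2 * π : ℝ) : ℂ) * Complex.I = t * Complex.I + 2 * π * Complex.I := by
      push_cast; ring
    rw [h, Complex.exp_add, Complex.exp_two_pi_mul_I, mul_one])

lemma ec_coe (t : ℝ) : ec (t : AddCircle (2*π)) = Complex.exp (t * Complex.I) :=
  Function.Periodic.lift_coe _ t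

lemma ec_continuous : Continuous ec := by
  rw [continuous_coinduced_dom]
  exact (Complex.continuous_exp.comp (by continuity))

lemma ec_add (a b : AddCircle (2*π)) : ec (a + b) = ec a * ec b := by
  induction a using QuotientAddGroup.induction_on
  induction b using QuotientAddGroup.induction_on
  rename_i s t
  rw [← QuotientAddGroup.mk_add]
  show ec ((s + t : ℝ) : AddCircle (2*π)) = _
  rw [ec_coe, ec_coe, ec_coe, ← Complex.exp_add]
  push_cast; ring_nf

lemma ec_norm (a : AddCircle (2*π)) : ‖ec a‖ = 1 := by
  induction a using QuotientAddGroup.induction_on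
  rename_i t
  rw [ec_coe, Complex.norm_exp]
  simp

lemma ec_ne_zero (a : AddCircle (2*π)) : ec a ≠ 0 := by
  intro h
  have := ec_norm a
  rw [h] at this; simp at this

section main
variable (d : ℕ)

abbrev Gt := Fin d → AddCircle (2 * π)

noncomputable def chara (k : Fin d → ℤ) : Gt d → ℂ := fun x => ∏ i, ec (x i) ^ (k i)

lemma chara_continuous (k : Fin d → ℤ) : Continuous (chara d k) := by
  unfold chara
  exact continuous_finset_prod _ fun i _ =>
    (ec_continuous.comp (continuous_apply i)).zpow₀ _ (fun x => Or.inl (ec_ne_zero _))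

lemma chara_add (k : Fin d → ℤ) (x y : Gt d) :
    chara d k (x + y) = chara d k x * chara d k y := by
  unfold chara
  rw [← Finset.prod_mul_distrib]
  refine Finset.prod_congr rfl fun i _ => ?_
  rw [show (x + y) i = x i + y i from rfl, ec_add, mul_zpow]

lemma chara_mk (k : Fin d → ℤ) (w : Fin d → ℝ) :
    chara d k (fun i => ((w i : ℝ) : AddCircle (2*π))) =
      Complex.exp ((∑ i, (k i : ℝ) * w i : ℝ) * Complex.I) := by
  unfold chara
  have : ∀ i : Fin d, ec ((w i : ℝ) : AddCircle (2*π)) ^ (k i)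
      = Complex.exp ((k i : ℂ) * ((w i : ℂ) * Complex.I)) := by
    intro i; rw [ec_coe, Complex.exp_int_mul]
  simp_rw [this, ← Complex.exp_sum]
  congr 1
  push_cast
  rw [Finset.sum_mul]
  refine Finset.sum_congr rfl fun i _ => by ring

end main


/-- for a finite positive measure μ on T*𝕋^d and Λ primitive, the
projection ⟨μ⟩_Λ of μ onto the x-Fourier modes in Λ is again a finite positive measure:
there is a finite measure ν whose Fourier coefficients (in x) coincide with those of μ
for k ∈ Λ and vanish for k ∉ Λ. -/
theorem muLambda_is_positive_measure (d : ℕ)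
    (μ : Measure ((Fin d → AddCircle (2 * π)) × (Fin d → ℝ))) [IsFiniteMeasure μ]
    (Λ : Submodule ℤ (Fin d → ℤ)) (hΛ : IsPrimitive Λ) :
    ∃ ν : Measure ((Fin d → AddCircle (2 * π)) × (Fin d → ℝ)), IsFiniteMeasure ν ∧
      ∀ (k : Fin d → ℤ) (g : (Fin d → ℝ) → ℂ), Continuous g → (∃ C, ∀ ξ, ‖g ξ‖ ≤ C) →
        (∫ p, (∏ i, ec (p.1 i) ^ (k i)) * g p.2 ∂ν)
          = if k ∈ Λ then ∫ p, (∏ i, ec (p.1 i) ^ (k i)) * g p.2 ∂μ else 0 := by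
  haveI : Fact (0 < 2 * π) := ⟨by positivity⟩
  classical
  -- Euclidean setup
  set E := EuclideanSpace ℝ (Fin d)
  let e : (Fin d → ℝ) ≃ₗ[ℝ] E := (WithLp.linearEquiv 2 ℝ (Fin d → ℝ)).symm
  let V : Submodule ℝ E := Submodule.map (e : (Fin d → ℝ) →ₗ[ℝ] E)
    (Submodule.span ℝ (zc '' (Λ : Set (Fin d → ℤ))))
  let W : Submodule ℝ E := Vᗮ
  -- the quotient homomorphism
  let φ : (Fin d → ℝ) →+ (Fin d → AddCircle (2*π)) :=
    { toFun := fun w => fun i => ((w i : ℝ) : AddCircle (2*π)),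
      map_zero' := by ext i; simp
      map_add' := by intro a b; ext i; simp }
  -- the subtorus
  let W' : Submodule ℝ (Fin d → ℝ) := Submodule.comap (e : (Fin d → ℝ) →ₗ[ℝ] E) W
  let H : AddSubgroup (Fin d → AddCircle (2*π)) :=
    AddSubgroup.map φ (W'.toAddSubgroup)
  let T : AddSubgroup (Fin d → AddCircle (2*π)) := H.topologicalClosure
  -- inner product computation
  have inner_e : ∀ x w : Fin d → ℝ, (inner ℝ (e x) (e w) : ℝ) = ∑ i, x i * w i := by
    intro x w
    rw [PiLp.inner_apply]
    show ∑ i, inner ℝ (x i) (w i) = _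
    refine Finset.sum_congr rfl fun i _ => ?_
    simp [mul_comm]
  -- membership characterizations
  have hmemV : ∀ k : Fin d → ℤ, k ∈ Λ → e (zc k) ∈ V := by
    intro k hk
    exact Submodule.mem_map_of_mem (Submodule.subset_span ⟨k, hk, rfl⟩)
  have hVW : ∀ k : Fin d → ℤ, k ∈ Λ → ∀ w ∈ W', ∑ i, (k i : ℝ) * w i = 0 := by
    intro k hk w hw
    have h1 : (inner ℝ (e (zc k)) (e w) : ℝ) = 0 := by
      have := (Submodule.mem_orthogonal V (e w)).mp hw _ (hmemV k hk)
      exact this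
    rw [inner_e] at h1
    exact h1
  have hconv : ∀ k : Fin d → ℤ, (∀ w ∈ W', ∑ i, (k i : ℝ) * w i = 0) → k ∈ Λ := by
    intro k hk
    apply hΛ
    have h1 : e (zc k) ∈ Wᗮ := by
      rw [Submodule.mem_orthogonal]
      intro u hu
      rw [real_inner_comm, show u = e (e.symm u) from (e.apply_symm_apply u).symm, inner_e]
      refine hk (e.symm u) ?_
      show e (e.symm u) ∈ W
      rw [e.apply_symm_apply]
      exact hu
    have h2 : Wᗮ = V := Submodule.orthogonal_orthogonal V
    rw [h2] at h1
    rw [Submodule.mem_map_equiv] at h1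
    simpa using h1
  -- character trivial on T iff k ∈ Λ
  have hchi1 : ∀ k : Fin d → ℤ, k ∈ Λ → ∀ t ∈ T, chara d k t = 1 := by
    intro k hk t ht
    have hcl : IsClosed {x : Fin d → AddCircle (2*π) | chara d k x = 1} :=
      isClosed_eq (chara_continuous d k) continuous_const
    have hsub : (H : Set (Fin d → AddCircle (2*π))) ⊆
        {x | chara d k x = 1} := by
      rintro x ⟨w, hw, rfl⟩
      show chara d k (φ w) = 1
      have : chara d k (φ w) =
          Complex.exp ((∑ i, (k i : ℝ) * w i : ℝ) * Complex.I) := chara_mk d k w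
      rw [this, hVW k hk w hw]
      simp
    exact closure_minimal hsub hcl ht
  have hchi2 : ∀ k : Fin d → ℤ, k ∉ Λ → ∃ t ∈ T, chara d k t ≠ 1 := by
    intro k hk
    by_contra hcon
    push_neg at hcon
    apply hk
    apply hconv
    intro w hw
    set c : ℝ := ∑ i, (k i : ℝ) * w i with hc
    by_contra hc0
    -- for every s : ℝ, s • w ∈ W' and its sum is s * c
    have key : ∀ s : ℝ, ∃ n : ℤ, s * c = n * (2 * π) := by
      intro s
      have hsw : s • w ∈ W' := Submodule.smul_mem _ s hw
      have h1 : chara d k (fun i => (((s • w) i : ℝ) : AddCircle (2*π))) = 1 :=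
        hcon (φ (s • w)) (AddSubgroup.le_topologicalClosure H ⟨s • w, hsw, rfl⟩)
      rw [chara_mk d k (s • w)] at h1
      have h2 : (∑ i, (k i : ℝ) * (s • w) i) = s * c := by
        rw [hc, Finset.mul_sum]
        exact Finset.sum_congr rfl fun i _ => by simp [smul_eq_mul]; ring
      rw [h2] at h1
      rcases Complex.exp_eq_one_iff.mp h1 with ⟨n, hn⟩
      refine ⟨n, ?_⟩
      have hn' : ((s * c : ℝ) : ℂ) * Complex.I = (((n:ℝ) * (2 * π) : ℝ) : ℂ) * Complex.I := by
        push_cast at hn ⊢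
        linear_combination hn
      have := mul_right_cancel₀ Complex.I_ne_zero hn'
      exact_mod_cast this
    rcases key (π / c) with ⟨n, hn⟩
    rw [div_mul_cancel₀ _ hc0] at hn
    have h1 : ((n:ℝ) * 2 - 1) * π = 0 := by linear_combination -hn
    have h2 : (n:ℝ) * 2 - 1 = 0 := by
      rcases mul_eq_zero.mp h1 with h | h
      · exact h
      · exact absurd h Real.pi_ne_zero
    have h3 : (n * 2 - 1 : ℤ) = 0 := by exact_mod_cast h2
    omega
  -- Haar measure on the closed subgroup T
  have hTclosed : IsClosed (T : Set (Fin d → AddCircle (2*π))) :=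
    H.isClosed_topologicalClosure
  haveI : CompactSpace ↥T := isCompact_iff_compactSpace.mp hTclosed.isCompact
  haveI : Nonempty ↥T := ⟨⟨0, T.zero_mem⟩⟩
  haveI : BorelSpace ↥T := Subtype.borelSpace (T : Set (Fin d → AddCircle (2*π)))
  let σT : Measure ↥T := Measure.addHaarMeasure (⊤ : TopologicalSpace.PositiveCompacts ↥T)
  haveI hσTprob : IsProbabilityMeasure σT := ⟨by
    rw [show σT = Measure.addHaarMeasure (⊤ : TopologicalSpace.PositiveCompacts ↥T) from rfl,
      ← TopologicalSpace.PositiveCompacts.coe_top (α := ↥T)]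
    exact Measure.addHaarMeasure_self⟩
  let σ : Measure (Fin d → AddCircle (2*π)) :=
    Measure.map (Subtype.val : ↥T → _) σT
  haveI : IsProbabilityMeasure σ :=
    Measure.isProbabilityMeasure_map continuous_subtype_val.measurable.aemeasurable
  haveI : IsFiniteMeasure σ := inferInstance
  haveI : SFinite σ := inferInstance
  haveI : IsFiniteMeasure (μ.prod σ) := inferInstance
  let Φ : ((Fin d → AddCircle (2*π)) × (Fin d → ℝ)) × (Fin d → AddCircle (2*π)) →
      (Fin d → AddCircle (2*π)) × (Fin d → ℝ) := fun q => (q.1.1 + q.2, q.1.2)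
  have hΦ : Continuous Φ := by
    apply Continuous.prodMk
    · exact (continuous_fst.comp continuous_fst).add continuous_snd
    · exact continuous_snd.comp continuous_fst
  refine ⟨Measure.map Φ (μ.prod σ), ⟨by
    rw [Measure.map_apply hΦ.measurable MeasurableSet.univ]
    exact measure_lt_top _ _⟩, ?_⟩
  intro k g hg hgb
  have hint : Continuous (fun p : (Fin d → AddCircle (2*π)) × (Fin d → ℝ) =>
      chara d k p.1 * g p.2) :=
    ((chara_continuous d k).comp continuous_fst).mul (hg.comp continuous_snd)
  show (∫ p, chara d k p.1 * g p.2 ∂(Measure.map Φ (μ.prod σ)))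
      = if k ∈ Λ then ∫ p, chara d k p.1 * g p.2 ∂μ else 0
  have step1 : (∫ p, chara d k p.1 * g p.2 ∂(Measure.map Φ (μ.prod σ)))
      = ∫ q, chara d k (q.1.1 + q.2) * g q.1.2 ∂(μ.prod σ) := by
    rw [integral_map hΦ.measurable.aemeasurable hint.aestronglyMeasurable]
  have hrew : (fun q : ((Fin d → AddCircle (2*π)) × (Fin d → ℝ)) × (Fin d → AddCircle (2*π)) =>
        chara d k (q.1.1 + q.2) * g q.1.2)
      = fun q => (chara d k q.1.1 * g q.1.2) * chara d k q.2 := by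
    funext q; rw [chara_add]; ring
  have step2 : (∫ q, chara d k (q.1.1 + q.2) * g q.1.2 ∂(μ.prod σ))
      = (∫ p, chara d k p.1 * g p.2 ∂μ) * ∫ x, chara d k x ∂σ := by
    rw [hrew]
    exact integral_prod_mul (μ := μ) (ν := σ)
      (f := fun p => chara d k p.1 * g p.2) (g := chara d k)
  have step3 : (∫ x, chara d k x ∂σ) = ∫ t : ↥T, chara d k ↑t ∂σT := by
    rw [integral_map continuous_subtype_val.measurable.aemeasurable
      (chara_continuous d k).aestronglyMeasurable]
  rw [step1, step2, step3]
  by_cases hk : k ∈ Λ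
  · rw [if_pos hk]
    have h1 : (fun t : ↥T => chara d k ↑t) = fun _ => (1:ℂ) :=
      funext fun t => hchi1 k hk t t.2
    rw [h1, integral_const]
    simp
  · rw [if_neg hk]
    obtain ⟨t₀, ht₀, hne⟩ := hchi2 k hk
    let t0 : ↥T := ⟨t₀, ht₀⟩
    have h1 : (∫ t : ↥T, chara d k ↑t ∂σT) = ∫ t : ↥T, chara d k ↑(t0 + t) ∂σT :=
      (integral_add_left_eq_self (μ := σT) (fun t : ↥T => chara d k ↑t) t0).symm
    have h2 : (fun t : ↥T => chara d k ↑(t0 + t))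
        = fun t : ↥T => chara d k t₀ * chara d k ↑t := by
      funext t
      show chara d k (t₀ + ↑t) = _
      rw [chara_add]
    have h3 : (∫ t : ↥T, chara d k ↑t ∂σT)
        = chara d k t₀ * ∫ t : ↥T, chara d k ↑t ∂σT := by
      conv_lhs => rw [h1, h2]
      exact integral_const_mul _ _
    have h4 : (1 - chara d k t₀) * (∫ t : ↥T, chara d k ↑t ∂σT) = 0 := by
      linear_combination h3
    have h5 : (∫ t : ↥T, chara d k ↑t ∂σT) = 0 := by
      rcases mul_eq_zero.mp h4 with h | h
      · exact absurd (by linear_combination -h : chara d k t₀ = 1) hne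
      · exact h
    rw [h5, mul_zero]
end

section
/- Let μ be a positive measure on 𝕋^d × (ℝ^d)* invariant under the flow φ_s(x,ξ) = (x + s·dH(ξ), ξ) for all s ∈ ℝ. Then for every primitive submodule Λ of (ℤ^d)*, the restriction μ⌉_{𝕋^d × R_Λ} equals ⟨μ⟩_Λ ⌉_{𝕋^d × R_Λ}; equivalently, μ⌉_{𝕋^d × R_Λ} is invariant under all translations (x,ξ) ↦ (x+v, ξ) with v ∈ Λ^⊥. -/
open MeasureTheory Real Filter

/-- R_Λ = {ξ : Λ_ξ = Λ}. -/
def RSet {d : ℕ} (H : (Fin d → ℝ) → ℝ) (Λ : Submodule ℤ (Fin d → ℤ)) : Set (Fin d → ℝ) :=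
  {ξ | ∀ k : Fin d → ℤ, k ∈ Λ ↔ fderiv ℝ H ξ (zc k) = 0}

open Complex
set_option maxHeartbeats 1000000

noncomputable section
namespace Aux5

instance : Fact (0 < 2 * π) := ⟨by positivity⟩

variable {d : ℕ}

abbrev G (d : ℕ) := Fin d → AddCircle (2 * π)

/-- multidimensional character -/
def ek (k : Fin d → ℤ) : C(G d, ℂ) :=
  ⟨fun x => ∏ i, fourier (k i) (x i), by
    exact continuous_finset_prod _ fun i _ =>
      (map_continuous (fourier (k i))).comp (continuous_apply i)⟩

lemma ek_apply (k : Fin d → ℤ) (x : G d) : ek k x = ∏ i, fourier (k i) (x i) := rfl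

lemma ek_norm (k : Fin d → ℤ) (x : G d) : ‖ek k x‖ = 1 := by
  rw [ek_apply]
  rw [norm_prod]
  simp [fourier_apply, Circle.norm_coe]

lemma ek_zero : ek (0 : Fin d → ℤ) = 1 := by
  ext x
  simp [ek_apply, fourier_zero]

lemma ek_mul (k l : Fin d → ℤ) : ek k * ek l = ek (k + l) := by
  ext x
  simp only [ContinuousMap.mul_apply, ek_apply, ← Finset.prod_mul_distrib]
  exact Finset.prod_congr rfl fun i _ => (fourier_add (m := k i) (n := l i)).symm

lemma ek_star (k : Fin d → ℤ) : star (ek k) = ek (-k) := by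
  ext x
  simp only [ContinuousMap.star_apply, ek_apply, starRingEnd_apply, star_prod]
  exact Finset.prod_congr rfl fun i _ => by
    rw [← starRingEnd_apply, ← fourier_neg]
    rfl

lemma fourier_real (n : ℤ) (r : ℝ) :
    fourier (T := 2 * π) n (r : AddCircle (2 * π)) = Complex.exp ((n * r) * Complex.I) := by
  rw [fourier_coe_apply]
  have hπ : (π : ℂ) ≠ 0 := Complex.ofReal_ne_zero.mpr Real.pi_ne_zero
  congr 1
  push_cast
  field_simp

lemma ek_translate (k : Fin d → ℤ) (x : G d) (w : Fin d → ℝ) :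
    ek k (fun i => x i + ((w i : ℝ) : AddCircle (2 * π)))
      = ek k x * Complex.exp ((∑ i, (k i : ℝ) * w i) * Complex.I) := by
  simp only [ek_apply]
  have : ∀ i : Fin d, fourier (k i) (x i + ((w i : ℝ) : AddCircle (2 * π)))
      = fourier (k i) (x i) * Complex.exp (((k i : ℝ) * w i) * Complex.I) := by
    intro i
    rw [fourier_apply, smul_add, AddCircle.toCircle_add, Circle.coe_mul, ← fourier_apply,
      ← fourier_apply, fourier_real]
    push_cast
    ring_nf
  simp only [this, Finset.prod_mul_distrib]
  congr 1
  rw [← Complex.exp_sum]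
  congr 1
  push_cast
  rw [Finset.sum_mul]


open Submodule Set in
/-- star subalgebra generated by the characters -/
def ekSubalgebra (d : ℕ) : StarSubalgebra ℂ C(G d, ℂ) where
  toSubalgebra := Algebra.adjoin ℂ (Set.range (ek (d := d)))
  star_mem' := by
    show Algebra.adjoin ℂ (Set.range (ek (d := d))) ≤
      star (Algebra.adjoin ℂ (Set.range (ek (d := d))))
    refine Algebra.adjoin_le ?_
    rintro - ⟨k, rfl⟩
    refine Algebra.subset_adjoin ⟨-k, ?_⟩
    rw [← ek_star]

open Submodule Set in
theorem ekSubalgebra_coe (d : ℕ) :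
    Subalgebra.toSubmodule (ekSubalgebra d).toSubalgebra = span ℂ (range (ek (d := d))) := by
  apply Algebra.adjoin_eq_span_of_subset
  refine Subset.trans ?_ Submodule.subset_span
  intro x hx
  refine Submonoid.closure_induction (fun _ => id) ⟨0, ek_zero⟩ ?_ hx
  rintro - - - - ⟨m, rfl⟩ ⟨n, rfl⟩
  exact ⟨m + n, (ek_mul m n).symm⟩

lemma ek_single (i : Fin d) (x : G d) : ek (Pi.single i 1) x = AddCircle.toCircle (x i) := by
  rw [ek_apply, Finset.prod_eq_single i]
  · rw [Pi.single_eq_same, fourier_one]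
  · intro j _ hj
    rw [Pi.single_eq_of_ne hj, fourier_zero]
  · simp

theorem ekSubalgebra_separatesPoints (d : ℕ) : (ekSubalgebra d).SeparatesPoints := by
  intro x y hxy
  obtain ⟨i, hi⟩ : ∃ i, x i ≠ y i := by
    by_contra h
    push_neg at h
    exact hxy (funext h)
  refine ⟨_, ⟨ek (Pi.single i 1), Algebra.subset_adjoin ⟨Pi.single i 1, rfl⟩, rfl⟩, ?_⟩
  dsimp only
  rw [ek_single, ek_single]
  intro h
  rw [Circle.coe_inj] at h
  exact hi (AddCircle.injective_toCircle (by positivity : (0:ℝ) < 2 * π).ne' h)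

theorem ekSubalgebra_closure_eq_top (d : ℕ) : (ekSubalgebra d).topologicalClosure = ⊤ :=
  ContinuousMap.starSubalgebra_topologicalClosure_eq_top_of_separatesPoints _
    (ekSubalgebra_separatesPoints d)

lemma cmap_integrable {X E : Type*} [MeasurableSpace X] [TopologicalSpace X]
    [OpensMeasurableSpace X] [CompactSpace X] [SecondCountableTopology X] [NormedAddCommGroup E]
    (f : C(X, E)) (ρ : Measure X) [IsFiniteMeasure ρ] : Integrable (fun x => f x) ρ :=
  Integrable.mono' (integrable_const ‖f‖)
    f.continuous.aestronglyMeasurable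
    (Eventually.of_forall fun x => f.norm_coe_le_norm x)

/-- Integration against a finite measure is Lipschitz on C(G,ℂ). -/
lemma integral_continuousMap_lipschitz (σ : Measure (G d)) [IsFiniteMeasure σ] :
    LipschitzWith (σ Set.univ).toNNReal (fun f : C(G d, ℂ) => ∫ x, f x ∂σ) := by
  refine LipschitzWith.of_dist_le_mul fun f g => ?_
  rw [dist_eq_norm, ← integral_sub (cmap_integrable f σ) (cmap_integrable g σ)]
  calc ‖∫ x, (f x - g x) ∂σ‖ ≤ dist f g * (σ Set.univ).toReal := by
        refine norm_integral_le_of_norm_le_const (Eventually.of_forall fun x => ?_)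
        rw [← dist_eq_norm]
        exact ContinuousMap.dist_apply_le_dist x
    _ = ((σ Set.univ).toNNReal : ℝ) * dist f g := by
        rw [mul_comm]
        rfl

/-- finite measures on the torus with equal character integrals coincide -/
theorem ext_of_ek_integral_eq (σ τ : Measure (G d)) [IsFiniteMeasure σ] [IsFiniteMeasure τ]
    (h : ∀ k : Fin d → ℤ, ∫ x, ek k x ∂σ = ∫ x, ek k x ∂τ) : σ = τ := by
  have hcont : ∀ f : C(G d, ℂ), ∫ x, f x ∂σ = ∫ x, f x ∂τ := by
    intro f
    have hZ : IsClosed {f : C(G d, ℂ) | ∫ x, f x ∂σ = ∫ x, f x ∂τ} := by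
      have : {f : C(G d, ℂ) | ∫ x, f x ∂σ = ∫ x, f x ∂τ}
          = {f : C(G d, ℂ) | (∫ x, f x ∂σ) - ∫ x, f x ∂τ = 0} := by
        ext f; simp [sub_eq_zero]
      rw [this]
      exact IsClosed.preimage (((integral_continuousMap_lipschitz σ).continuous).sub
        ((integral_continuousMap_lipschitz τ).continuous)) isClosed_singleton
    have hspan : ∀ f ∈ Submodule.span ℂ (Set.range (ek (d := d))),
        ∫ x, f x ∂σ = ∫ x, f x ∂τ := by
      intro f hf
      induction hf using Submodule.span_induction with
      | mem f hf => obtain ⟨k, rfl⟩ := hf; exact h _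
      | zero => simp
      | add f g _ _ hf hg =>
          simp only [ContinuousMap.add_apply]
          rw [integral_add (cmap_integrable f σ) (cmap_integrable g σ),
            integral_add (cmap_integrable f τ) (cmap_integrable g τ), hf, hg]
      | smul c f _ hf =>
          simp only [ContinuousMap.smul_apply, smul_eq_mul]
          rw [integral_const_mul, integral_const_mul, hf]
    have hA : ∀ f ∈ ekSubalgebra d, ∫ x, f x ∂σ = ∫ x, f x ∂τ := by
      intro f hf
      refine hspan f ?_
      have := ekSubalgebra_coe d
      have hf' : f ∈ Subalgebra.toSubmodule (ekSubalgebra d).toSubalgebra := hf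
      rwa [this] at hf'
    have hdense : f ∈ closure ((ekSubalgebra d) : Set C(G d, ℂ)) := by
      have := ekSubalgebra_closure_eq_top d
      have : f ∈ (ekSubalgebra d).topologicalClosure := this ▸ trivial
      exact this
    exact closure_minimal (fun g hg => hA g hg) hZ hdense
  -- now conclude via bounded continuous nnreal functions
  apply ext_of_forall_lintegral_eq_of_IsFiniteMeasure
  intro f
  have hint : ∀ (ρ : Measure (G d)), IsFiniteMeasure ρ → Integrable (fun x => (f x : ℝ)) ρ := by
    intro ρ hρ
    exact cmap_integrable ⟨fun x => ((f x : ℝ)), NNReal.continuous_coe.comp f.continuous⟩ ρ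
  have hre : ∫ x, ((f x : ℝ)) ∂σ = ∫ x, ((f x : ℝ)) ∂τ := by
    have hc : Continuous fun x : G d => ((f x : ℝ)) := NNReal.continuous_coe.comp f.continuous
    have := hcont ⟨fun x => Complex.ofRealCLM ((f x : ℝ)), Complex.ofRealCLM.continuous.comp hc⟩
    simp only [ContinuousMap.coe_mk] at this
    rw [ContinuousLinearMap.integral_comp_comm _ (hint σ inferInstance),
      ContinuousLinearMap.integral_comp_comm _ (hint τ inferInstance)] at this
    exact Complex.ofReal_injective (by simpa using this)
  rw [lintegral_coe_eq_integral _ (hint σ inferInstance),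
    lintegral_coe_eq_integral _ (hint τ inferInstance), hre]


section Part3

variable {d : ℕ} {H : (Fin d → ℝ) → ℝ} {Λ : Submodule ℤ (Fin d → ℤ)}

lemma clm_zc (L : (Fin d → ℝ) →L[ℝ] ℝ) (k : Fin d → ℤ) :
    L (zc k) = ∑ i, (k i : ℝ) * L (Pi.single i 1) := by
  have hzc : zc k = ∑ i, (k i : ℝ) • (Pi.single i (1 : ℝ) : Fin d → ℝ) := by
    ext j
    simp [zc, Pi.single_apply, Finset.sum_ite_eq]
  rw [hzc, map_sum]
  simp [smul_eq_mul]

lemma a_cont (hH : ContDiff ℝ 1 H) (k : Fin d → ℤ) :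
    Continuous fun ξ => fderiv ℝ H ξ (zc k) :=
  (hH.continuous_fderiv one_ne_zero).clm_apply continuous_const

lemma measurable_RSet (hH : ContDiff ℝ 1 H) (Λ : Submodule ℤ (Fin d → ℤ)) :
    MeasurableSet (RSet H Λ) := by
  have hR : RSet H Λ = ⋂ k : Fin d → ℤ, {ξ | k ∈ Λ ↔ fderiv ℝ H ξ (zc k) = 0} := by
    ext ξ; simp [RSet, Set.mem_iInter]
  rw [hR]
  refine MeasurableSet.iInter fun k => ?_
  have hc := (a_cont hH k).measurable (MeasurableSet.singleton (0 : ℝ))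
  by_cases hk : k ∈ Λ
  · have : {ξ | k ∈ Λ ↔ fderiv ℝ H ξ (zc k) = 0}
        = (fun ξ => fderiv ℝ H ξ (zc k)) ⁻¹' {0} := by ext ξ; simp [hk]
    rw [this]; exact hc
  · have : {ξ | k ∈ Λ ↔ fderiv ℝ H ξ (zc k) = 0}
        = ((fun ξ => fderiv ℝ H ξ (zc k)) ⁻¹' {0})ᶜ := by ext ξ; simp [hk]
    rw [this]; exact hc.compl

/-- The flow map. -/
def Phi (H : (Fin d → ℝ) → ℝ) (s : ℝ) :
    (G d × (Fin d → ℝ)) → (G d × (Fin d → ℝ)) := fun p =>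
  ((fun i => p.1 i + ((s * fderiv ℝ H p.2 (Pi.single i 1) : ℝ) : AddCircle (2 * π))), p.2)

lemma Phi_cont (hH : ContDiff ℝ 1 H) (s : ℝ) : Continuous (Phi H s) := by
  refine Continuous.prodMk (continuous_pi fun i => ?_) continuous_snd
  refine ((continuous_apply i).comp continuous_fst).add ?_
  refine (AddCircle.continuous_mk' _).comp ?_
  exact continuous_const.mul
    (((hH.continuous_fderiv one_ne_zero).comp continuous_snd).clm_apply continuous_const)

/-- Key vanishing lemma: on a flow-invariant finite measure concentrated (a.e.) on
`R_Λ` in the second variable, the character integrals for `k ∉ Λ` vanish. -/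
lemma key_vanish (hH : ContDiff ℝ 1 H)
    (ν : Measure (G d × (Fin d → ℝ))) [IsFiniteMeasure ν]
    (hflow : ∀ s : ℝ, Measure.map (Phi H s) ν = ν)
    (hae : ∀ᵐ p ∂ν, p.2 ∈ RSet H Λ)
    (k : Fin d → ℤ) (hk : k ∉ Λ)
    (g : (Fin d → ℝ) → ℂ) (hg : Measurable g) (hgb : ∀ ξ, ‖g ξ‖ ≤ 1) :
    ∫ p, ek k p.1 * g p.2 ∂ν = 0 := by
  classical
  set a : (Fin d → ℝ) → ℝ := fun ξ => fderiv ℝ H ξ (zc k) with ha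
  have ha_cont : Continuous a := a_cont hH k
  set f : G d × (Fin d → ℝ) → ℂ := fun p => ek k p.1 * g p.2 with hfdef
  have hf_meas : Measurable f :=
    ((ek k).continuous.measurable.comp measurable_fst).mul (hg.comp measurable_snd)
  have hf_bdd : ∀ p, ‖f p‖ ≤ 1 := by
    intro p
    rw [hfdef]
    simp only []
    rw [norm_mul, ek_norm, one_mul]
    exact hgb p.2
  have hane : ∀ᵐ p ∂ν, a p.2 ≠ 0 := by
    filter_upwards [hae] with p hp
    intro h0
    exact hk (((hp k)).mpr h0)
  have hexp_norm : ∀ (r : ℝ) (s : ℝ), ‖Complex.exp ((↑r * Complex.I) * s)‖ = 1 := by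
    intro r s
    rw [Complex.norm_exp]
    have : ((↑r * Complex.I) * s).re = 0 := by simp
    rw [this, Real.exp_zero]
  -- Step 1: flow invariance in integral form
  have hstep : ∀ s : ℝ, ∫ p, f p * Complex.exp ((↑(a p.2) * Complex.I) * s) ∂ν
      = ∫ p, f p ∂ν := by
    intro s
    conv_rhs => rw [← hflow s]
    rw [integral_map (Phi_cont hH s).measurable.aemeasurable hf_meas.aestronglyMeasurable]
    refine integral_congr_ae (Eventually.of_forall fun p => ?_)
    show f p * _ = f (Phi H s p)
    rw [hfdef]
    simp only [Phi]
    rw [ek_translate]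
    have hsum : ∑ i, (k i : ℝ) * (s * fderiv ℝ H p.2 (Pi.single i 1)) = a p.2 * s := by
      rw [show a p.2 = fderiv ℝ H p.2 (zc k) from rfl, clm_zc, Finset.sum_mul]
      exact Finset.sum_congr rfl fun i _ => by ring
    rw [hsum]
    have : ((a p.2 * s : ℝ) : ℂ) * Complex.I = (↑(a p.2) * Complex.I) * s := by
      push_cast; ring
    rw [this]
    ring
  -- Step 2: averaged multiplier, defined by a closed formula
  set T : ℕ → ℝ := fun n => (n : ℝ) + 1 with hT
  have hTpos : ∀ n, 0 < T n := fun n => by positivity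
  set W : ℕ → (G d × (Fin d → ℝ)) → ℂ := fun n p =>
    if a p.2 = 0 then 1 else
      ((T n : ℂ))⁻¹ * ((Complex.exp ((↑(a p.2) * Complex.I) * (T n)) - 1)
        / (↑(a p.2) * Complex.I)) with hW
  have hW_meas : ∀ n, Measurable (W n) := by
    intro n
    refine Measurable.ite ?_ measurable_const ?_
    · exact (ha_cont.measurable.comp measurable_snd) (MeasurableSet.singleton 0)
    · refine measurable_const.mul (Measurable.div (Measurable.sub ?_ measurable_const) ?_)
      · refine Complex.measurable_exp.comp ?_
        exact ((Complex.measurable_ofReal.comp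
          (ha_cont.measurable.comp measurable_snd)).mul measurable_const).mul measurable_const
      · exact (Complex.measurable_ofReal.comp
          (ha_cont.measurable.comp measurable_snd)).mul measurable_const
  -- where `a ≠ 0`, `W` is the average of the exponential over `[0, T n]`
  have hW_avg : ∀ n p, a p.2 ≠ 0 → W n p
      = ((T n : ℂ))⁻¹ * ∫ s in (0:ℝ)..(T n), Complex.exp ((↑(a p.2) * Complex.I) * s) := by
    intro n p hp
    have hc : (↑(a p.2) * Complex.I) ≠ 0 := by
      simp [Complex.ofReal_eq_zero, hp, Complex.I_ne_zero]
    rw [hW]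
    simp only [if_neg hp]
    rw [integral_exp_mul_complex hc]
    norm_num
  have hW_bdd : ∀ n p, a p.2 ≠ 0 → ‖W n p‖ ≤ 1 := by
    intro n p hp
    rw [hW_avg n p hp]
    rw [norm_mul]
    have h1 : ‖((T n : ℝ) : ℂ)⁻¹‖ = (T n)⁻¹ := by
      rw [norm_inv]
      simp [abs_of_pos (hTpos n)]
    have h2 : ‖∫ s in (0:ℝ)..(T n), Complex.exp ((↑(a p.2) * Complex.I) * s)‖
        ≤ 1 * |T n - 0| := by
      refine intervalIntegral.norm_integral_le_of_norm_le_const fun s _ => ?_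
      exact le_of_eq (hexp_norm _ _)
    rw [h1]
    calc (T n)⁻¹ * ‖∫ s in (0:ℝ)..(T n), Complex.exp ((↑(a p.2) * Complex.I) * s)‖
        ≤ (T n)⁻¹ * (1 * |T n - 0|) := mul_le_mul_of_nonneg_left h2 (by positivity)
      _ = 1 := by
          rw [sub_zero, abs_of_pos (hTpos n), one_mul]
          exact inv_mul_cancel₀ (hTpos n).ne'
  -- Step 3: each average equals the original integral
  have havg : ∀ n, ∫ p, f p * W n p ∂ν = ∫ p, f p ∂ν := by
    intro n
    haveI : IsFiniteMeasure (volume.restrict (Set.Ioc (0:ℝ) (T n))) := by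
      constructor
      rw [Measure.restrict_apply_univ, Real.volume_Ioc]
      exact ENNReal.ofReal_lt_top
    have hswap : ∫ p, (∫ s in Set.Ioc (0:ℝ) (T n),
          f p * Complex.exp ((↑(a p.2) * Complex.I) * s)) ∂ν
        = ∫ s in Set.Ioc (0:ℝ) (T n), (∫ p,
          f p * Complex.exp ((↑(a p.2) * Complex.I) * s) ∂ν) := by
      apply MeasureTheory.integral_integral_swap
      have hmeas : Measurable fun q : (G d × (Fin d → ℝ)) × ℝ =>
          f q.1 * Complex.exp ((↑(a q.1.2) * Complex.I) * q.2) := by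
        refine (hf_meas.comp measurable_fst).mul ?_
        refine Complex.measurable_exp.comp ?_
        exact ((Complex.measurable_ofReal.comp
          (ha_cont.measurable.comp (measurable_snd.comp measurable_fst))).mul
          measurable_const).mul (Complex.measurable_ofReal.comp measurable_snd)
      refine Integrable.mono' (integrable_const 1) hmeas.aestronglyMeasurable
        (Eventually.of_forall fun q => ?_)
      rw [Function.uncurry_def]
      simp only [norm_mul]
      rw [hexp_norm, mul_one]
      exact hf_bdd q.1
    have hinner : ∀ s : ℝ, ∫ p, f p * Complex.exp ((↑(a p.2) * Complex.I) * s) ∂ν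
        = ∫ p, f p ∂ν := hstep
    calc ∫ p, f p * W n p ∂ν
        = ∫ p, ((T n : ℂ))⁻¹ * (∫ s in Set.Ioc (0:ℝ) (T n),
            f p * Complex.exp ((↑(a p.2) * Complex.I) * s)) ∂ν := by
          refine integral_congr_ae ?_
          filter_upwards [hane] with p hp
          calc f p * W n p
              = ((T n : ℂ))⁻¹ * (f p * ∫ s in Set.Ioc (0:ℝ) (T n),
                  Complex.exp ((↑(a p.2) * Complex.I) * s)) := by
                rw [hW_avg n p hp, intervalIntegral.integral_of_le (hTpos n).le]
                ring
            _ = ((T n : ℂ))⁻¹ * ∫ s in Set.Ioc (0:ℝ) (T n),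
                  f p * Complex.exp ((↑(a p.2) * Complex.I) * s) := by
                congr 1
                exact (integral_const_mul (f p) _).symm
      _ = ((T n : ℂ))⁻¹ * ∫ p, (∫ s in Set.Ioc (0:ℝ) (T n),
            f p * Complex.exp ((↑(a p.2) * Complex.I) * s)) ∂ν := integral_const_mul _ _
      _ = ((T n : ℂ))⁻¹ * ∫ s in Set.Ioc (0:ℝ) (T n), (∫ p,
            f p * Complex.exp ((↑(a p.2) * Complex.I) * s) ∂ν) := by rw [hswap]
      _ = ((T n : ℂ))⁻¹ * ∫ s in Set.Ioc (0:ℝ) (T n), (∫ p, f p ∂ν) := by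
          congr 1
          exact setIntegral_congr_ae measurableSet_Ioc
            (Eventually.of_forall fun s _ => hinner s)
      _ = ∫ p, f p ∂ν := by
          rw [setIntegral_const, Real.volume_real_Ioc_of_le (hTpos n).le, sub_zero]
          have : (T n) • (∫ p, f p ∂ν) = ((T n : ℝ) : ℂ) * ∫ p, f p ∂ν := by
            rw [Complex.real_smul]
          rw [this, ← mul_assoc, inv_mul_cancel₀, one_mul]
          exact_mod_cast (hTpos n).ne'
  -- Step 4: pointwise convergence of f * W to 0 where a ≠ 0
  have hWlim : ∀ᵐ p ∂ν, Tendsto (fun n => f p * W n p) atTop (nhds 0) := by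
    filter_upwards [hane] with p hp
    have hnorm : ∀ n, ‖f p * W n p‖ ≤ (T n)⁻¹ * (2 / |a p.2|) := by
      intro n
      have h1 : ‖((T n : ℝ) : ℂ)‖ = T n := by simp [abs_of_pos (hTpos n)]
      have h2 : ‖Complex.exp ((↑(a p.2) * Complex.I) * (T n)) - 1‖ ≤ 2 := by
        refine le_trans (norm_sub_le _ _) ?_
        rw [hexp_norm, norm_one]
        norm_num
      have h3 : ‖(↑(a p.2) * Complex.I : ℂ)‖ = |a p.2| := by
        rw [norm_mul]
        simp [Complex.norm_real]
      have hWn : ‖W n p‖ ≤ (T n)⁻¹ * (2 / |a p.2|) := by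
        rw [hW]
        simp only [if_neg hp]
        rw [norm_mul, norm_div, norm_inv, h1, h3]
        gcongr
      calc ‖f p * W n p‖ = ‖f p‖ * ‖W n p‖ := norm_mul _ _
        _ ≤ 1 * ((T n)⁻¹ * (2 / |a p.2|)) :=
            mul_le_mul (hf_bdd p) hWn (norm_nonneg _) (by norm_num)
        _ = (T n)⁻¹ * (2 / |a p.2|) := one_mul _
    have hto : Tendsto (fun n => (T n)⁻¹ * (2 / |a p.2|)) atTop (nhds 0) := by
      rw [show (0:ℝ) = 0 * (2 / |a p.2|) by ring]
      refine Tendsto.mul_const _ ?_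
      rw [hT]
      exact tendsto_inv_atTop_zero.comp (tendsto_atTop_add_const_right atTop 1
        tendsto_natCast_atTop_atTop)
    exact squeeze_zero_norm hnorm hto
  -- Step 5: dominated convergence
  have hDCT : Tendsto (fun n => ∫ p, f p * W n p ∂ν) atTop (nhds (∫ _, (0:ℂ) ∂ν)) := by
    refine tendsto_integral_of_dominated_convergence (fun _ => (1:ℝ)) ?_ ?_ ?_ ?_
    · intro n
      exact (hf_meas.mul (hW_meas n)).aestronglyMeasurable
    · exact integrable_const 1
    · intro n
      filter_upwards [hane] with p hp
      rw [norm_mul]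
      calc ‖f p‖ * ‖W n p‖ ≤ 1 * 1 :=
            mul_le_mul (hf_bdd p) (hW_bdd n p hp) (norm_nonneg _) (by norm_num)
        _ = 1 := one_mul 1
    · exact hWlim
  simp only [integral_zero] at hDCT
  have hconst : Tendsto (fun _ : ℕ => ∫ p, f p ∂ν) atTop (nhds 0) := by
    convert hDCT using 1
    funext n
    exact (havg n).symm
  exact tendsto_nhds_unique (tendsto_const_nhds (x := ∫ p, f p ∂ν)) hconst

end Part3
end Aux5
end

open Aux5 in
/-- if a positive measure μ on 𝕋^d × (ℝ^d)* is invariant under the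
completely integrable flow φ_s(x,ξ) = (x + s·dH(ξ), ξ), then for every primitive
submodule Λ its restriction to 𝕋^d × R_Λ is invariant under all translations
(x,ξ) ↦ (x + v, ξ), v ∈ Λ^⊥ (equivalently, it agrees there with ⟨μ⟩_Λ). -/
theorem restriction_invariant_under_LambdaPerp (d : ℕ) (H : (Fin d → ℝ) → ℝ)
    (hH : ContDiff ℝ 1 H)
    (μ : Measure ((Fin d → AddCircle (2 * π)) × (Fin d → ℝ))) [IsFiniteMeasure μ]
    (hinv : ∀ s : ℝ, Measure.map
      (fun p : (Fin d → AddCircle (2 * π)) × (Fin d → ℝ) =>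
        ((fun i => p.1 i + ((s * fderiv ℝ H p.2 (Pi.single i 1) : ℝ) : AddCircle (2 * π))),
          p.2)) μ = μ)
    (Λ : Submodule ℤ (Fin d → ℤ)) (hΛ : IsPrimitive Λ)
    (v : Fin d → ℝ) (hv : ∀ k ∈ Λ, (∑ i, (k i : ℝ) * v i) = 0) :
    Measure.map
      (fun p : (Fin d → AddCircle (2 * π)) × (Fin d → ℝ) =>
        ((fun i => p.1 i + ((v i : ℝ) : AddCircle (2 * π))), p.2))
      (μ.restrict ((Set.univ : Set (Fin d → AddCircle (2 * π))) ×ˢ RSet H Λ))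
    = μ.restrict ((Set.univ : Set (Fin d → AddCircle (2 * π))) ×ˢ RSet H Λ) := by
  classical
  set S : Set ((Fin d → AddCircle (2 * π)) × (Fin d → ℝ)) :=
    (Set.univ : Set (Fin d → AddCircle (2 * π))) ×ˢ RSet H Λ with hSdef
  have hS : MeasurableSet S := MeasurableSet.univ.prod (measurable_RSet hH Λ)
  set ν := μ.restrict S with hνdef
  set τv : (Fin d → AddCircle (2 * π)) → (Fin d → AddCircle (2 * π)) :=
    fun x => fun i => x i + ((v i : ℝ) : AddCircle (2 * π)) with hτ
  have hτv_cont : Continuous τv :=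
    continuous_pi fun i => ((continuous_apply i).comp continuous_id).add continuous_const
  show Measure.map (fun p : (Fin d → AddCircle (2 * π)) × (Fin d → ℝ) => (τv p.1, p.2)) ν = ν
  set Tv : ((Fin d → AddCircle (2 * π)) × (Fin d → ℝ)) →
      ((Fin d → AddCircle (2 * π)) × (Fin d → ℝ)) := fun p => (τv p.1, p.2) with hTv
  have hTv_cont : Continuous Tv := (hτv_cont.comp continuous_fst).prodMk continuous_snd
  -- flow invariance of the restricted measure
  have hinv' : ∀ s : ℝ, Measure.map (Phi H s) μ = μ := hinv
  have hflowS : ∀ s : ℝ, Measure.map (Phi H s) ν = ν := by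
    intro s
    have hpre : (Phi H s) ⁻¹' S = S := by
      ext p
      simp only [Set.mem_preimage, hSdef, Set.mem_prod, Set.mem_univ, true_and]
      exact Iff.rfl
    calc Measure.map (Phi H s) ν
        = Measure.map (Phi H s) (μ.restrict ((Phi H s) ⁻¹' S)) := by rw [hpre]
      _ = (Measure.map (Phi H s) μ).restrict S :=
          (Measure.restrict_map (Phi_cont hH s).measurable hS).symm
      _ = ν := by rw [hinv' s]
  have haeS : ∀ᵐ p ∂ν, p.2 ∈ RSet H Λ := by
    filter_upwards [ae_restrict_mem hS] with p hp
    exact hp.2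
  haveI : IsFiniteMeasure (Measure.map Tv ν) := by
    constructor
    rw [Measure.map_apply hTv_cont.measurable MeasurableSet.univ, Set.preimage_univ]
    exact measure_lt_top ν _
  -- the rectangle computation
  have hrect : ∀ A B, MeasurableSet A → MeasurableSet B →
      (Measure.map Tv ν) (A ×ˢ B) = ν (A ×ˢ B) := by
    intro A B hA hB
    set σB : Measure (Fin d → AddCircle (2 * π)) :=
      Measure.map Prod.fst (ν.restrict (Set.univ ×ˢ B)) with hσB
    haveI : IsFiniteMeasure σB := by
      constructor
      rw [hσB, Measure.map_apply measurable_fst MeasurableSet.univ, Set.preimage_univ]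
      exact measure_lt_top _ _
    have hσB_apply : ∀ A', MeasurableSet A' → σB A' = ν (A' ×ˢ B) := by
      intro A' hA'
      rw [hσB, Measure.map_apply measurable_fst hA',
        Measure.restrict_apply (measurable_fst hA')]
      congr 1
      ext p
      simp [Set.mem_prod]
    have htrans : ∀ k : Fin d → ℤ, ∀ x, ek k (τv x)
        = ek k x * Complex.exp ((∑ i, (k i : ℝ) * v i) * Complex.I) :=
      fun k x => ek_translate k x v
    have hchar : ∀ k : Fin d → ℤ,
        ∫ x, ek k x ∂(Measure.map τv σB) = ∫ x, ek k x ∂σB := by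
      intro k
      rw [integral_map hτv_cont.measurable.aemeasurable
        (ek k).continuous.aestronglyMeasurable]
      by_cases hk : k ∈ Λ
      · refine integral_congr_ae (Filter.Eventually.of_forall fun x => ?_)
        show ek k (τv x) = ek k x
        rw [htrans k x, hv k hk]
        simp
      · have hzero : ∫ x, ek k x ∂σB = 0 := by
          rw [hσB, integral_map measurable_fst.aemeasurable
            (ek k).continuous.aestronglyMeasurable]
          have hBset : ((Set.univ : Set (Fin d → AddCircle (2 * π))) ×ˢ B)
              = Prod.snd ⁻¹' B := by
            ext p; simp
          rw [hBset, ← integral_indicator (measurable_snd hB)]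
          have hind : (Set.indicator (Prod.snd ⁻¹' B)
                (fun p : (Fin d → AddCircle (2 * π)) × (Fin d → ℝ) => ek k p.1))
              = fun p : (Fin d → AddCircle (2 * π)) × (Fin d → ℝ) =>
                  ek k p.1 * Set.indicator B (fun _ => (1:ℂ)) p.2 := by
            funext p
            by_cases hpB : p.2 ∈ B
            · rw [Set.indicator_of_mem (by simpa using hpB),
                Set.indicator_of_mem hpB, mul_one]
            · rw [Set.indicator_of_notMem (by simpa using hpB),
                Set.indicator_of_notMem hpB, mul_zero]
          rw [hind]
          exact key_vanish hH ν hflowS haeS k hk _ (measurable_const.indicator hB)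
            (fun ξ => by by_cases h : ξ ∈ B <;> simp [Set.indicator_apply, h])
        show ∫ x, ek k (τv x) ∂σB = ∫ x, ek k x ∂σB
        calc ∫ x, ek k (τv x) ∂σB
            = ∫ x, ek k x * Complex.exp ((∑ i, (k i : ℝ) * v i) * Complex.I) ∂σB := by
              refine integral_congr_ae (Filter.Eventually.of_forall fun x => ?_)
              exact htrans k x
          _ = (∫ x, ek k x ∂σB) * Complex.exp ((∑ i, (k i : ℝ) * v i) * Complex.I) :=
              integral_mul_const _ _
          _ = 0 := by rw [hzero, zero_mul]
          _ = ∫ x, ek k x ∂σB := hzero.symm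
    have hσ_inv : Measure.map τv σB = σB := ext_of_ek_integral_eq _ _ hchar
    have hTpre : Tv ⁻¹' (A ×ˢ B) = (τv ⁻¹' A) ×ˢ B := by
      ext p
      simp [hTv, Set.mem_prod]
    rw [Measure.map_apply hTv_cont.measurable (hA.prod hB), hTpre,
      ← hσB_apply _ (hτv_cont.measurable hA),
      ← Measure.map_apply hτv_cont.measurable hA, hσ_inv, hσB_apply A hA]
  refine MeasureTheory.ext_of_generate_finite _ generateFrom_prod.symm isPiSystem_prod ?_ ?_
  · rintro s ⟨A, hA, B, hB, rfl⟩
    exact hrect A B hA hB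
  · have := hrect Set.univ Set.univ MeasurableSet.univ MeasurableSet.univ
    rwa [Set.univ_prod_univ] at this
end

section
/- In dimension d = 2, isoenergetic non-degeneracy at every ξ implies condition (A): for every ξ with Λ₁ := dH(ξ)^⊥ ∩ (ℤ²)* ≠ {0} and dH(ξ) ≠ 0, and every η₁ ∈ ⟨Λ₁⟩ \ {0}, one has d²H(ξ)·η₁ ∉ Λ₁^⊥ = ℝ·dH(ξ). -/
/-- in dimension 2, isoenergetic non-degeneracy (at every ξ) implies
condition (A) for k = 1: for every ξ with dH(ξ) ≠ 0 and Λ₁ = dH(ξ)^⊥ ∩ (ℤ²)* ≠ {0},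
and every nonzero η₁ ∈ ⟨Λ₁⟩, the vector d²H(ξ)·η₁ does not lie in Λ₁^⊥ = ℝ·dH(ξ). -/
theorem isoenergetic_implies_conditionA_dim2 (H : (Fin 2 → ℝ) → ℝ) (hH : ContDiff ℝ 2 H)
    (hiso : ∀ ξ : Fin 2 → ℝ, ∀ (η : Fin 2 → ℝ) (lam : ℝ),
      fderiv ℝ H ξ η = 0 → fderiv ℝ (fderiv ℝ H) ξ η = lam • fderiv ℝ H ξ →
      η = 0 ∧ lam = 0) :
    ∀ ξ : Fin 2 → ℝ, fderiv ℝ H ξ ≠ 0 →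
      (∃ k : Fin 2 → ℤ, k ≠ 0 ∧ fderiv ℝ H ξ (zc k) = 0) →
      ∀ η₁ : Fin 2 → ℝ, η₁ ≠ 0 →
        η₁ ∈ Submodule.span ℝ (zc '' {k : Fin 2 → ℤ | fderiv ℝ H ξ (zc k) = 0}) →
        ¬ ∃ c : ℝ, fderiv ℝ (fderiv ℝ H) ξ η₁ = c • fderiv ℝ H ξ := by
  intro ξ _ _ η₁ hne hspan ⟨c, hc⟩
  have hker : η₁ ∈ LinearMap.ker (fderiv ℝ H ξ : (Fin 2 → ℝ) →ₗ[ℝ] ℝ) := by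
    refine Submodule.span_le.mpr ?_ hspan
    rintro _ ⟨k, hk, rfl⟩
    exact hk
  exact hne (hiso ξ η₁ c hker hc).1
end

section
/- Bloch–Floquet periodicity of K_h: if f is 2πℤ^d-periodic, then for every σ ∈ I_Λ^h and every k ∈ 2πℤ^d, K_h f(σ, y + k) = K_h f(σ, y) e^{−i ω_h(σ)·k}, where ω_h(σ) := {σ_Λ/h} ∈ ⟨Λ⟩/Λ is the fractional part of the Λ-component of σ/h. Equivalently, the Fourier transform of K_h f(σ, ·) is supported in Λ − ω_h(σ). -/
open MeasureTheory Real Filter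

/-- The Bloch-type transform K_h f(σ,·): the part of a 2πℤ^d-periodic function f
(with Fourier coefficients c) built from the frequencies z ∈ ℤ^d with hz − σ ∈ ⟨Λ⟩,
oscillating at the rescaled frequencies (hz − σ)/h, multiplied by the cutoff m(σ). -/
noncomputable def KK (d : ℕ) (Λ : Submodule ℤ (Fin d → ℤ)) (m : (Fin d → ℝ) → ℂ)
    (c : (Fin d → ℤ) → ℂ) (h : ℝ) (σ : Fin d → ℝ) (y : Fin d → ℝ) : ℂ :=
  m σ * ∑' z : {z : Fin d → ℤ //
      (fun i => h * (z i : ℝ) - σ i) ∈ Submodule.span ℝ (zc '' (Λ : Set (Fin d → ℤ)))},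
    c z.1 * Complex.exp (Complex.I * (((∑ i, (h * (z.1 i : ℝ) - σ i) * y i) / h : ℝ) : ℂ))

lemma expaux (N : ℤ) (a b w : ℝ) (hab : a = b + 2 * π * N - w) :
    Complex.exp (Complex.I * (a : ℂ)) =
      Complex.exp (Complex.I * (b : ℂ)) * Complex.exp (-Complex.I * (w : ℂ)) := by
  subst hab
  rw [← Complex.exp_add]
  push_cast
  rw [show Complex.I * ((b : ℂ) + 2 * π * N - w)
      = (Complex.I * b + -Complex.I * w) + (N : ℂ) * (2 * π * Complex.I) from by ring,
    Complex.exp_add, Complex.exp_int_mul_two_pi_mul_I, mul_one]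

/-- Bloch–Floquet periodicity of K_h.  If σ ∈ I_Λ^h (σ/h ∈ ℤ^d − ⟨Λ⟩), then
there is ω = ω_h(σ) ∈ ⟨Λ⟩, with every frequency z − σ/h of K_h f(σ,·) lying in Λ − ω
(i.e. the Fourier transform of K_h f(σ,·) is supported in Λ − ω), such that for every
k ∈ 2πℤ^d: K_h f(σ, y + k) = K_h f(σ, y) e^{−iω·k}. -/
theorem Kh_bloch_floquet (d : ℕ) (Λ : Submodule ℤ (Fin d → ℤ)) (hΛ : IsPrimitive Λ)
    (m : (Fin d → ℝ) → ℂ) (c : (Fin d → ℤ) → ℂ) (h : ℝ) (hh : 0 < h) (σ : Fin d → ℝ)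
    (hσ : ∃ z : Fin d → ℤ, (fun i => (z i : ℝ) - σ i / h)
        ∈ Submodule.span ℝ (zc '' (Λ : Set (Fin d → ℤ)))) :
    ∃ ω : Fin d → ℝ, ω ∈ Submodule.span ℝ (zc '' (Λ : Set (Fin d → ℤ))) ∧
      (∀ z : Fin d → ℤ,
        (fun i => h * (z i : ℝ) - σ i) ∈ Submodule.span ℝ (zc '' (Λ : Set (Fin d → ℤ))) →
        ∃ l ∈ Λ, (fun i => (z i : ℝ) - σ i / h) = fun i => (l i : ℝ) - ω i) ∧
      ∀ (y : Fin d → ℝ) (k : Fin d → ℤ),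
        KK d Λ m c h σ (fun i => y i + 2 * π * (k i : ℝ))
          = KK d Λ m c h σ y *
              Complex.exp (-Complex.I * ((∑ i, ω i * (2 * π * (k i : ℝ)) : ℝ) : ℂ)) := by
  obtain ⟨z₀, hz₀⟩ := hσ
  have hne : h ≠ 0 := ne_of_gt hh
  refine ⟨fun i => σ i / h - (z₀ i : ℝ), ?_, ?_, ?_⟩
  · have : (fun i => σ i / h - (z₀ i : ℝ)) = -(fun i => (z₀ i : ℝ) - σ i / h) := by
      funext i; simp [Pi.neg_apply]
    rw [this]
    exact Submodule.neg_mem _ hz₀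
  · intro z hz
    have hz' : (fun i => (z i : ℝ) - σ i / h)
        ∈ Submodule.span ℝ (zc '' (Λ : Set (Fin d → ℤ))) := by
      have : (fun i => (z i : ℝ) - σ i / h) = (1 / h) • (fun i => h * (z i : ℝ) - σ i) := by
        funext i; simp [Pi.smul_apply, smul_eq_mul]; field_simp
      rw [this]
      exact Submodule.smul_mem _ _ hz
    have hdiff : zc (z - z₀) ∈ Submodule.span ℝ (zc '' (Λ : Set (Fin d → ℤ))) := by
      have : zc (z - z₀) = (fun i => (z i : ℝ) - σ i / h) - (fun i => (z₀ i : ℝ) - σ i / h) := by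
        funext i; simp [zc, Pi.sub_apply]
      rw [this]
      exact Submodule.sub_mem _ hz' hz₀
    refine ⟨z - z₀, hΛ _ hdiff, ?_⟩
    funext i
    simp only [Pi.sub_apply]
    push_cast
    ring
  · intro y k
    -- per-term identity
    have key : ∀ z : {z : Fin d → ℤ //
        (fun i => h * (z i : ℝ) - σ i) ∈ Submodule.span ℝ (zc '' (Λ : Set (Fin d → ℤ)))},
        c z.1 * Complex.exp (Complex.I *
          (((∑ i, (h * (z.1 i : ℝ) - σ i) * (y i + 2 * π * (k i : ℝ))) / h : ℝ) : ℂ))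
        = (c z.1 * Complex.exp (Complex.I *
            (((∑ i, (h * (z.1 i : ℝ) - σ i) * y i) / h : ℝ) : ℂ))) *
          Complex.exp (-Complex.I * ((∑ i, (σ i / h - (z₀ i : ℝ)) * (2 * π * (k i : ℝ)) : ℝ) : ℂ)) := by
      intro z
      have hterm : ∀ i, h * (z.1 i : ℝ) - σ i
          = h * (((z.1 i : ℝ) - (z₀ i : ℝ)) - (σ i / h - (z₀ i : ℝ))) := by
        intro i; field_simp; ring
      set N : ℤ := ∑ i, (z.1 i - z₀ i) * k i with hN
      have hsum : (∑ i, (h * (z.1 i : ℝ) - σ i) * (y i + 2 * π * (k i : ℝ))) / h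
          = (∑ i, (h * (z.1 i : ℝ) - σ i) * y i) / h + 2 * π * (N : ℝ)
            - (∑ i, (σ i / h - (z₀ i : ℝ)) * (2 * π * (k i : ℝ))) := by
        have e1 : (∑ i, (h * (z.1 i : ℝ) - σ i) * (y i + 2 * π * (k i : ℝ)))
            = h * (∑ i, (((z.1 i : ℝ) - (z₀ i : ℝ)) - (σ i / h - (z₀ i : ℝ)))
                * (y i + 2 * π * (k i : ℝ))) := by
          rw [Finset.mul_sum]
          exact Finset.sum_congr rfl fun i _ => by rw [hterm i]; ring
        have e2 : (∑ i, (h * (z.1 i : ℝ) - σ i) * y i)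
            = h * (∑ i, (((z.1 i : ℝ) - (z₀ i : ℝ)) - (σ i / h - (z₀ i : ℝ))) * y i) := by
          rw [Finset.mul_sum]
          exact Finset.sum_congr rfl fun i _ => by rw [hterm i]; ring
        rw [e1, e2, mul_div_cancel_left₀ _ hne, mul_div_cancel_left₀ _ hne]
        have e3 : ∀ i, (((z.1 i : ℝ) - (z₀ i : ℝ)) - (σ i / h - (z₀ i : ℝ)))
            * (y i + 2 * π * (k i : ℝ))
            = (((z.1 i : ℝ) - (z₀ i : ℝ)) - (σ i / h - (z₀ i : ℝ))) * y i
              + 2 * π * (((z.1 i - z₀ i) * k i : ℤ) : ℝ)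
              - (σ i / h - (z₀ i : ℝ)) * (2 * π * (k i : ℝ)) := by
          intro i; push_cast; ring
        rw [Finset.sum_congr rfl fun i _ => e3 i, Finset.sum_sub_distrib,
          Finset.sum_add_distrib, ← Finset.mul_sum]
        congr 2
        push_cast [hN]
        ring
      rw [expaux N _ _ _ hsum]
      ring
    simp only [KK]
    rw [tsum_congr key, tsum_mul_right]
    ring
end
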